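/- arXiv:1401.5234 — 2 statements merged into one kernel-verified Lean document; each statement's English description precedes it below -/
import Mathlib

section
/- Let q ≥ 5 be a prime power, m ≥ 2, 0 ≤ a ≤ m−2, and 4 ≤ b ≤ ⌊q/2⌋+2. Define f : 𝔽_q^m → 𝔽_q by f(x) = ∏_{i=1}^{a}(1 − x_i^{q−1}) · ∏_{j=1}^{b−2}(x_{a+1} − b_j) · (x_{a+2} − u)(x_{a+2} − v), where b₁, …, b_{b−2} are distinct in 𝔽_q and u ≠ v. Then deg(f) ≤ a(q−1)+b, |f| = (q−2)(q−b+2)·q^{m−a−2}, and (q−2)(q−b+2)·q^{m−a−2} > (q−b+1)(q−1)·q^{m−a−2}. -/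
/-!
The function `f` has product form `f x = ∏ i, pᵢ (x i)` with univariate polynomials `pᵢ`:
`1 - X ^ (q - 1)` on the first `a` coordinates, `∏ⱼ (X - bⱼ)` and `(X - u) (X - v)` on the next
two, and `1` on the remaining `m - a - 2`. Hence `f` is the evaluation of `∏ i, pᵢ (Xᵢ)`, of total
degree at most `∑ deg pᵢ = a (q - 1) + b`, and its support is the product of the supports of
the `pᵢ`, of sizes `1`, `q - b + 2`, `q - 2` and `q`. With `r = q - b + 1`, the final inequality
`r (q - 1) < (q - 2) (r + 1)` is equivalent to `r < q - 2`, i.e. to `b > 3`.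
-/

/-- The Hamming weight of a function: the number of points where it is nonzero. -/
noncomputable def hamWt {α F : Type*} [Zero F] (f : α → F) : ℕ := {x | f x ≠ 0}.ncard

open Polynomial

theorem hamWt_prod_apply {ι α R : Type*} [Fintype ι] [Fintype α] [CommMonoidWithZero R]
    [NoZeroDivisors R] [Nontrivial R] (g : ι → α → R) :
    hamWt (fun x : ι → α => ∏ i, g i (x i)) = ∏ i, hamWt (g i) := by
  classical
  have hsupp : {x : ι → α | ∏ i, g i (x i) ≠ 0} =
      Fintype.piFinset fun i => Finset.univ.filter fun t => g i t ≠ 0 := by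
    ext x
    simp [Finset.prod_ne_zero_iff]
  simp only [hamWt, hsupp, Set.ncard_coe_finset, Fintype.card_piFinset]
  congr! with i
  rw [← Set.ncard_coe_finset]
  simp

theorem hamWt_prod_sub {ι F : Type*} [Fintype ι] [Field F] [Fintype F] {c : ι → F}
    (hc : Function.Injective c) :
    hamWt (fun t => ∏ j, (t - c j)) = Fintype.card F - Fintype.card ι := by
  have hsupp : {t | ∏ j, (t - c j) ≠ 0} = (Set.range c)ᶜ := by
    ext t
    simp only [Set.mem_ofPred_eq, Finset.prod_ne_zero_iff, Finset.mem_univ, true_imp_iff,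
      sub_ne_zero, Set.mem_compl_iff, Set.mem_range, not_exists]
    exact forall_congr' fun j => ne_comm
  rw [hamWt, hsupp, Set.ncard_compl, Set.ncard_range_of_injective hc, Nat.card_eq_fintype_card,
    Nat.card_eq_fintype_card]

theorem hamWt_sub_mul_sub {F : Type*} [Field F] [Fintype F] {u v : F} (huv : u ≠ v) :
    hamWt (fun t => (t - u) * (t - v)) = Fintype.card F - 2 := by
  have hinj : Function.Injective ![u, v] := by
    intro i j
    fin_cases i <;> fin_cases j <;> simp [huv, huv.symm]
  simpa using hamWt_prod_sub hinj

theorem hamWt_one_sub_pow_card_sub_one {F : Type*} [Field F] [Fintype F] :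
    hamWt (fun t : F => 1 - t ^ (Fintype.card F - 1)) = 1 := by
  have hsupp : {t : F | 1 - t ^ (Fintype.card F - 1) ≠ 0} = {0} := by
    ext t
    by_cases ht : t = 0
    · simp [ht, Nat.sub_ne_zero_of_lt Fintype.one_lt_card]
    · simp [ht, FiniteField.pow_card_sub_one_eq_one t ht]
  rw [hamWt, hsupp, Set.ncard_singleton]

theorem hamWt_one {α F : Type*} [Zero F] [One F] [NeZero (1 : F)] :
    hamWt (fun _ : α => (1 : F)) = Nat.card α := by
  simp [hamWt]

theorem totalDegree_aeval_X_le {σ R : Type*} [CommSemiring R] (p : R[X]) (i : σ) :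
    (aeval (MvPolynomial.X i : MvPolynomial σ R) p).totalDegree ≤ p.natDegree := by
  conv_lhs => rw [p.as_sum_range_C_mul_X_pow]
  simp only [map_sum, map_mul, aeval_C, map_pow, aeval_X]
  refine (MvPolynomial.totalDegree_finsetSum _ _).trans (Finset.sup_le fun n hn => ?_)
  rw [MvPolynomial.algebraMap_eq, MvPolynomial.C_mul_X_pow_eq_monomial]
  refine (MvPolynomial.totalDegree_monomial_le _ _).trans ?_
  simpa [Nat.lt_succ_iff] using hn

theorem eval_aeval_X {σ R : Type*} [CommSemiring R] (p : R[X]) (x : σ → R) (i : σ) :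
    MvPolynomial.eval x (aeval (MvPolynomial.X i) p) = p.eval (x i) := by
  rw [aeval_def, hom_eval₂, MvPolynomial.algebraMap_eq, MvPolynomial.eval,
    MvPolynomial.eval₂Hom_comp_C, MvPolynomial.eval₂Hom_X']
  rfl

theorem exists_totalDegree_le_eval_eq_prod {σ R : Type*} [Fintype σ] [CommSemiring R]
    (p : σ → R[X]) :
    ∃ P : MvPolynomial σ R, P.totalDegree ≤ ∑ i, (p i).natDegree ∧
      ∀ x, MvPolynomial.eval x P = ∏ i, (p i).eval (x i) := by
  refine ⟨∏ i, aeval (MvPolynomial.X i) (p i), ?_, fun x => ?_⟩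
  · exact (MvPolynomial.totalDegree_finsetProd _ _).trans
      (Finset.sum_le_sum fun i _ => totalDegree_aeval_X_le (p i) i)
  · simp only [map_prod, eval_aeval_X]

theorem sub_add_one_mul_sub_one_lt {q b : ℕ} (hb : 4 ≤ b) (hbq : b ≤ q) :
    (q - b + 1) * (q - 1) < (q - 2) * (q - b + 2) := by
  zify [hbq, (by omega : 2 ≤ q), (by omega : 1 ≤ q)]
  nlinarith

theorem stmt4 {F : Type*} [Field F] [Fintype F] (q : ℕ) (hq : Fintype.card F = q)
    (m a b : ℕ) (hm : 2 ≤ m) (ha : a ≤ m - 2)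
    (hb4 : 4 ≤ b) (hb : 2 * b ≤ q + 4)
    (B : Fin (b - 2) → F) (hB : Function.Injective B)
    (u v : F) (huv : u ≠ v)
    (f : (Fin m → F) → F)
    (hf : ∀ x : Fin m → F,
      f x = (∏ i : Fin a, (1 - (x (Fin.castLE (by omega) i)) ^ (q - 1))) *
            (∏ j : Fin (b - 2), (x ⟨a, by omega⟩ - B j)) *
            ((x ⟨a + 1, by omega⟩ - u) * (x ⟨a + 1, by omega⟩ - v))) :
    (∃ P : MvPolynomial (Fin m) F, P.totalDegree ≤ a * (q - 1) + b ∧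
      ∀ x, MvPolynomial.eval x P = f x) ∧
    hamWt f = (q - 2) * (q - b + 2) * q ^ (m - a - 2) ∧
    (q - b + 1) * (q - 1) * q ^ (m - a - 2) < (q - 2) * (q - b + 2) * q ^ (m - a - 2) := by
  obtain ⟨k, rfl⟩ : ∃ k, m = a + 2 + k := ⟨m - a - 2, by omega⟩
  subst hq
  have hbq : b ≤ Fintype.card F := by omega
  let p : Fin (a + 2 + k) → F[X] :=
    Fin.addCases (Fin.addCases (fun _ => 1 - X ^ (Fintype.card F - 1))
      ![∏ j, (X - C (B j)), (X - C u) * (X - C v)]) fun _ => 1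
  have hfp : f = fun x => ∏ i, (p i).eval (x i) := by
    ext x
    simp only [hf, mul_assoc, Fin.prod_univ_add, Fin.addCases_left, Fin.addCases_right,
      Fin.prod_univ_two, Matrix.cons_val_zero, Matrix.cons_val_one, Matrix.cons_val_fin_one,
      eval_prod, eval_sub, eval_one, eval_pow, eval_X, eval_C, eval_mul, Finset.prod_const_one,
      mul_one, p]
    -- `Fin.castAdd k (Fin.castAdd 2 i)` and `Fin.castLE _ i` agree definitionally
    rfl
  refine ⟨?_, ?_, ?_⟩
  · obtain ⟨P, hdeg, hP⟩ := exists_totalDegree_le_eval_eq_prod p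
    refine ⟨P, hdeg.trans ?_, fun x => by rw [hP, hfp]⟩
    simp only [Fin.sum_univ_add, Fin.addCases_left, Fin.addCases_right, Finset.sum_const,
      Finset.card_univ, Fintype.card_fin, smul_eq_mul, Fin.sum_univ_two, Matrix.cons_val_zero,
      Matrix.cons_val_one, Matrix.cons_val_fin_one, natDegree_finsetProd_X_sub_C_eq_card,
      natDegree_one, p]
    have hdeg₁ : (1 - X ^ (Fintype.card F - 1) : F[X]).natDegree ≤ Fintype.card F - 1 := by
      compute_degree
    have hdeg₂ : ((X - C u) * (X - C v)).natDegree ≤ 2 := by compute_degree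
    have := Nat.mul_le_mul_left a hdeg₁
    omega
  · rw [hfp, hamWt_prod_apply fun i t => (p i).eval t]
    simp only [p, Fin.prod_univ_add, Fin.addCases_left, Fin.addCases_right, Fin.prod_univ_two,
      Matrix.cons_val_zero, Matrix.cons_val_one, eval_prod, eval_sub, eval_mul, eval_one, eval_pow,
      eval_X, eval_C, hamWt_prod_sub hB, hamWt_sub_mul_sub huv, hamWt_one_sub_pow_card_sub_one,
      hamWt_one, Nat.card_eq_fintype_card, Fintype.card_fin, Finset.prod_const_one,
      Finset.prod_const, Finset.card_univ]
    rw [show Fintype.card F - (b - 2) = Fintype.card F - b + 2 by omega,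
      show a + 2 + k - a - 2 = k by omega]
    ring
  · exact Nat.mul_lt_mul_of_pos_right (sub_add_one_mul_sub_one_lt hb4 hbq) (by positivity)
end

section
/- Let q ≥ 13 be a prime power. The third weight of R_q(5,2) equals (q−3)(q−2). -/
/-!
Since `(q - 3)(q - 2) = (q - 4)(q - 1) + 2`, the claim is that no polynomial of degree at most 5
on `F_q²` vanishes at exactly `5q - 5` points, while the product of three vertical and two
horizontal linear forms has weight `(q - 3)(q - 2)`.

Let `Z` be the zero set. If some `x ∈ Z` lies on no line contained in `Z`, each of the `q + 1`
lines through `x` meets `Z` in at most five points, so `|Z| ≤ 4(q + 1) + 1`. Otherwise `Z` is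
the union of the `k` lines it contains, which pairwise meet in at most one point: `k ≤ 4` gives
`|Z| ≤ 4q`, and `k ≥ 6` gives `|Z| ≥ 6q - 15` by inclusion–exclusion. For `k = 5`, if three or
four of the lines pass through a point `p`, every other line meets at least all but one of them
away from `p`, so `|Z| ≤ 5q - 6`; if all five do, `|Z| = 5q - 4`; and if no three are
concurrent, `5q - |Z|` is the number of non-parallel pairs, i.e. `10` minus the number of
parallel pairs, and five lines never form exactly five parallel pairs.
-/

open Finset

section Counting

variable {ι : Type*}

lemma sum_mul_sub_one_le (s : Finset ι) (n : ι → ℕ) :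
    ∑ i ∈ s, n i * (n i - 1) ≤ (∑ i ∈ s, n i) * (∑ i ∈ s, n i - 1) := by
  rw [sum_mul]
  exact sum_le_sum fun i hi =>
    Nat.mul_le_mul_left _ (Nat.sub_le_sub_right (single_le_sum (by simp) hi) 1)

/-- With `m` the largest `n i`, `m (m - 1) ≤ 10 ≤ 5 (m - 1)` forces `m = 3`, and then the
other terms contribute at most `2 · 1`. -/
lemma sum_mul_sub_one_ne_ten [DecidableEq ι] {s : Finset ι} {n : ι → ℕ}
    (hn : ∑ i ∈ s, n i = 5) : ∑ i ∈ s, n i * (n i - 1) ≠ 10 := by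
  intro h10
  obtain ⟨i, hi, hmax⟩ := exists_max_image s n (nonempty_of_sum_ne_zero (by rw [hn]; norm_num))
  have hle : n i ≤ 5 := hn ▸ single_le_sum (by simp) hi
  have hupper : ∑ j ∈ s, n j * (n j - 1) ≤ 5 * (n i - 1) := by
    rw [← hn, sum_mul]
    exact sum_le_sum fun j hj => Nat.mul_le_mul_left _ (Nat.sub_le_sub_right (hmax j hj) 1)
  have hrest := sum_mul_sub_one_le (s.erase i) n
  have hsplit := add_sum_erase s (fun j => n j * (n j - 1)) hi
  rw [show ∑ j ∈ s.erase i, n j = 5 - n i by rw [← hn, ← add_sum_erase s n hi]; omega] at hrest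
  interval_cases n i <;> omega

lemma card_filter_offDiag_ne_ten {β : Type*} [DecidableEq ι] [DecidableEq β] {s : Finset ι}
    (hs : #s = 5) (f : ι → β) : #{x ∈ s.offDiag | f x.1 = f x.2} ≠ 10 := by
  rw [card_eq_sum_card_fiberwise (f := fun x => f x.1) (t := s.image f)
    fun x hx => mem_image_of_mem f (mem_offDiag.1 (mem_filter.1 hx).1).1]
  have hfib : ∀ v ∈ s.image f, #{x ∈ {x ∈ s.offDiag | f x.1 = f x.2} | f x.1 = v}
      = #{i ∈ s | f i = v} * (#{i ∈ s | f i = v} - 1) := by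
    intro v _
    rw [Nat.mul_sub_one, ← offDiag_card]
    congr 1
    ext x
    simp only [mem_filter, mem_offDiag]
    constructor
    · rintro ⟨⟨⟨h1, h2, h12⟩, he⟩, hv⟩; exact ⟨⟨h1, hv⟩, ⟨h2, he ▸ hv⟩, h12⟩
    · rintro ⟨⟨h1, hv⟩, ⟨h2, hv'⟩, h12⟩; exact ⟨⟨⟨h1, h2, h12⟩, hv.trans hv'.symm⟩, hv⟩
  rw [sum_congr rfl hfib]
  exact sum_mul_sub_one_ne_ten (by rw [← card_eq_sum_card_image, hs])

end Counting

section SetSystem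

variable {α : Type*} [DecidableEq α] (S : Finset (Finset α))

lemma sum_card_filter_mem_biUnion :
    ∑ p ∈ S.biUnion id, #{ℓ ∈ S | p ∈ ℓ} = ∑ ℓ ∈ S, #ℓ := by
  refine (sum_card_bipartiteAbove_eq_sum_card_bipartiteBelow (fun p ℓ => p ∈ ℓ)).trans
    (sum_congr rfl fun ℓ hℓ => congrArg card ?_)
  rw [bipartiteBelow, filter_mem_eq_inter, inter_eq_right]
  exact subset_biUnion_of_mem id hℓ

lemma sum_card_filter_mem_biUnion_mul_sub_one :
    ∑ p ∈ S.biUnion id, #{ℓ ∈ S | p ∈ ℓ} * (#{ℓ ∈ S | p ∈ ℓ} - 1)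
      = ∑ x ∈ S.offDiag, #(x.1 ∩ x.2) := by
  have hpairs : ∀ p, #{ℓ ∈ S | p ∈ ℓ} * (#{ℓ ∈ S | p ∈ ℓ} - 1)
      = #(S.offDiag.bipartiteAbove (fun p x => p ∈ x.1 ∧ p ∈ x.2) p) := by
    intro p
    rw [Nat.mul_sub_one, ← offDiag_card, bipartiteAbove]
    congr 1
    ext x
    simp only [mem_offDiag, mem_filter]
    tauto
  simp_rw [hpairs]
  refine (sum_card_bipartiteAbove_eq_sum_card_bipartiteBelow _).trans
    (sum_congr rfl fun x hx => congrArg card ?_)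
  ext p
  simp only [bipartiteBelow, mem_filter, mem_inter, mem_biUnion, id, and_iff_right_iff_imp]
  exact fun h => ⟨x.1, (mem_offDiag.1 hx).1, h.1⟩

/-- Second-order inclusion–exclusion: a point on `m` members is counted `m` times on the left,
`m (m - 1)` times in the sum over ordered pairs, and `m (m - 1) + 2 = 2 m + (m - 1)(m - 2)`. -/
lemma two_mul_sum_card_add_sum_eq :
    2 * ∑ ℓ ∈ S, #ℓ + ∑ p ∈ S.biUnion id, (#{ℓ ∈ S | p ∈ ℓ} - 1) * (#{ℓ ∈ S | p ∈ ℓ} - 2)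
      = 2 * #(S.biUnion id) + ∑ x ∈ S.offDiag, #(x.1 ∩ x.2) := by
  have hpos : ∀ p ∈ S.biUnion id, 1 ≤ #{ℓ ∈ S | p ∈ ℓ} := fun p hp => by
    obtain ⟨ℓ, hℓ, hpℓ⟩ := mem_biUnion.1 hp
    exact card_pos.2 ⟨ℓ, mem_filter.2 ⟨hℓ, hpℓ⟩⟩
  rw [← sum_card_filter_mem_biUnion, ← sum_card_filter_mem_biUnion_mul_sub_one, mul_sum,
    card_eq_sum_ones (S.biUnion id), mul_sum, ← sum_add_distrib, ← sum_add_distrib]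
  refine sum_congr rfl fun p hp => ?_
  obtain ⟨k, hk⟩ := Nat.exists_eq_add_of_le' (hpos p hp)
  rw [hk]
  rcases k with _ | k
  · rfl
  · rw [show k + 1 + 1 - 1 = k + 1 by omega, show k + 1 + 1 - 2 = k by omega]; ring

end SetSystem

/-- The incidences of `q`-point lines of an affine plane, `σ ℓ` being the direction of `ℓ`. -/
structure IsAffineLineFamily {α β : Type*} [DecidableEq α] (S : Finset (Finset α)) (q : ℕ)
    (σ : Finset α → β) : Prop where
  card_eq : ∀ ℓ ∈ S, #ℓ = q
  inter_eq_empty : ∀ ℓ ∈ S, ∀ ℓ' ∈ S, ℓ ≠ ℓ' → σ ℓ = σ ℓ' → ℓ ∩ ℓ' = ∅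
  card_inter_eq_one : ∀ ℓ ∈ S, ∀ ℓ' ∈ S, σ ℓ ≠ σ ℓ' → #(ℓ ∩ ℓ') = 1

namespace IsAffineLineFamily

variable {α β : Type*} [DecidableEq α] {S T A : Finset (Finset α)} {q : ℕ} {σ : Finset α → β}
  {ℓ ℓ' b : Finset α} {p : α}

lemma mono (h : IsAffineLineFamily S q σ) (hT : T ⊆ S) : IsAffineLineFamily T q σ where
  card_eq ℓ hℓ := h.card_eq ℓ (hT hℓ)
  inter_eq_empty ℓ hℓ ℓ' hℓ' := h.inter_eq_empty ℓ (hT hℓ) ℓ' (hT hℓ')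
  card_inter_eq_one ℓ hℓ ℓ' hℓ' := h.card_inter_eq_one ℓ (hT hℓ) ℓ' (hT hℓ')

lemma card_inter_le_one (h : IsAffineLineFamily S q σ) (hℓ : ℓ ∈ S) (hℓ' : ℓ' ∈ S)
    (hne : ℓ ≠ ℓ') : #(ℓ ∩ ℓ') ≤ 1 := by
  by_cases hσ : σ ℓ = σ ℓ'
  · simp [h.inter_eq_empty ℓ hℓ ℓ' hℓ' hne hσ]
  · exact (h.card_inter_eq_one ℓ hℓ ℓ' hℓ' hσ).le

lemma inter_eq_singleton (h : IsAffineLineFamily S q σ) (hℓ : ℓ ∈ S) (hℓ' : ℓ' ∈ S)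
    (hne : ℓ ≠ ℓ') (hp : p ∈ ℓ) (hp' : p ∈ ℓ') : ℓ ∩ ℓ' = {p} :=
  eq_singleton_iff_unique_mem.2 ⟨mem_inter.2 ⟨hp, hp'⟩, fun _ hx =>
    card_le_one.1 (h.card_inter_le_one hℓ hℓ' hne) _ hx p (mem_inter.2 ⟨hp, hp'⟩)⟩

lemma eq_of_mem_of_mem (h : IsAffineLineFamily S q σ) (hℓ : ℓ ∈ S) (hℓ' : ℓ' ∈ S)
    (hσ : σ ℓ = σ ℓ') (hp : p ∈ ℓ) (hp' : p ∈ ℓ') : ℓ = ℓ' :=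
  by_contra fun hne => by
    simpa [h.inter_eq_empty ℓ hℓ ℓ' hℓ' hne hσ] using mem_inter.2 ⟨hp, hp'⟩

lemma card_biUnion_le (h : IsAffineLineFamily S q σ) : #(S.biUnion id) ≤ #S * q :=
  card_biUnion_le_card_mul _ _ _ fun ℓ hℓ => (h.card_eq ℓ hℓ).le

lemma mul_le_card_biUnion (h : IsAffineLineFamily S q σ) :
    2 * (#S * q) ≤ 2 * #(S.biUnion id) + #S * (#S - 1) := by
  have hsum : ∑ ℓ ∈ S, #ℓ = #S * q := by rw [sum_congr rfl h.card_eq, sum_const, smul_eq_mul]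
  have hinter : ∑ x ∈ S.offDiag, #(x.1 ∩ x.2) ≤ #S * (#S - 1) := by
    rw [Nat.mul_sub_one, ← offDiag_card, card_eq_sum_ones]
    exact sum_le_sum fun x hx => by
      obtain ⟨h1, h2, h12⟩ := mem_offDiag.1 hx
      exact h.card_inter_le_one h1 h2 h12
  have := two_mul_sum_card_add_sum_eq S
  rw [hsum] at this
  omega

lemma card_biUnion_of_forall_mem (h : IsAffineLineFamily S q σ) (hA : A ⊆ S)
    (hpA : ∀ a ∈ A, p ∈ a) (hne : A.Nonempty) : #(A.biUnion id) = #A * (q - 1) + 1 := by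
  have hunion : A.biUnion id = insert p (A.biUnion fun a => a.erase p) := by
    ext x
    by_cases hx : x = p
    · subst hx
      obtain ⟨a, ha⟩ := hne
      simpa using ⟨a, ha, hpA a ha⟩
    · simp [hx]
  have hdisj : (A : Set (Finset α)).PairwiseDisjoint fun a => a.erase p := by
    intro a ha a' ha' hne
    refine disjoint_left.2 fun x hx hx' => (mem_erase.1 hx).1 ?_
    have := h.inter_eq_singleton (hA ha) (hA ha') hne (hpA a ha) (hpA a' ha')
    exact mem_singleton.1 (this ▸ mem_inter.2 ⟨(mem_erase.1 hx).2, (mem_erase.1 hx').2⟩)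
  rw [hunion, card_insert_of_notMem (by simp), card_biUnion hdisj,
    sum_congr rfl fun a ha => by rw [card_erase_of_mem (hpA a ha), h.card_eq a (hA ha)],
    sum_const, smul_eq_mul]

/-- The lines of `A` through `p` have distinct directions, so `b` is parallel to at most one of
them, and it meets the others in distinct points since `p ∉ b`. -/
lemma card_le_card_inter_biUnion_add_one (h : IsAffineLineFamily S q σ) (hA : A ⊆ S)
    (hpA : ∀ a ∈ A, p ∈ a) (hb : b ∈ S) (hpb : p ∉ b) : #A ≤ #(b ∩ A.biUnion id) + 1 := by
  classical
  have hdisj : (A : Set (Finset α)).PairwiseDisjoint fun a => b ∩ id a := by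
    intro a ha a' ha' hne
    refine disjoint_left.2 fun x hx hx' => hpb ?_
    have hxp : x ∈ a ∩ a' := mem_inter.2 ⟨(mem_inter.1 hx).2, (mem_inter.1 hx').2⟩
    rw [h.inter_eq_singleton (hA ha) (hA ha') hne (hpA a ha) (hpA a' ha'), mem_singleton] at hxp
    exact hxp ▸ (mem_inter.1 hx).1
  have hpar : #{a ∈ A | σ b = σ a} ≤ 1 := card_le_one.2 fun a ha a' ha' => by
    rw [mem_filter] at ha ha'
    exact h.eq_of_mem_of_mem (hA ha.1) (hA ha'.1) (ha.2.symm.trans ha'.2) (hpA a ha.1)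
      (hpA a' ha'.1)
  have hmeet : #{a ∈ A | ¬σ b = σ a} ≤ #(b ∩ A.biUnion id) := by
    rw [inter_biUnion, card_biUnion hdisj, card_eq_sum_ones]
    calc ∑ a ∈ A with ¬σ b = σ a, 1 = ∑ a ∈ A with ¬σ b = σ a, #(b ∩ id a) :=
          sum_congr rfl fun a ha =>
            (h.card_inter_eq_one b hb a (hA (mem_filter.1 ha).1) (mem_filter.1 ha).2).symm
      _ ≤ ∑ a ∈ A, #(b ∩ id a) := sum_le_sum_of_subset (filter_subset _ _)
  have := card_filter_add_card_filter_not (s := A) (fun a => σ b = σ a)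
  omega

lemma card_biUnion_le_of_mem (h : IsAffineLineFamily S q σ) (hp : 1 ≤ #{ℓ ∈ S | p ∈ ℓ}) :
    #(S.biUnion id) ≤ #{ℓ ∈ S | p ∈ ℓ} * (q - 1) + 1
      + (#S - #{ℓ ∈ S | p ∈ ℓ}) * (q + 1 - #{ℓ ∈ S | p ∈ ℓ}) := by
  set A := S.filter (p ∈ ·)
  have hAS : A ⊆ S := filter_subset _ _
  have hpA : ∀ a ∈ A, p ∈ a := fun a ha => (mem_filter.1 ha).2
  have hcover : S.biUnion id ⊆ A.biUnion id ∪ (S \ A).biUnion fun b => b \ A.biUnion id := by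
    intro x hx
    obtain ⟨ℓ, hℓ, hxℓ⟩ := mem_biUnion.1 hx
    by_cases hxA : x ∈ A.biUnion id
    · exact mem_union_left _ hxA
    · have hℓA : ℓ ∉ A := fun hℓA => hxA (mem_biUnion.2 ⟨ℓ, hℓA, hxℓ⟩)
      exact mem_union_right _ (mem_biUnion.2 ⟨ℓ, mem_sdiff.2 ⟨hℓ, hℓA⟩, mem_sdiff.2 ⟨hxℓ, hxA⟩⟩)
  have hout : ∀ b ∈ S \ A, #(b \ A.biUnion id) ≤ q + 1 - #A := by
    intro b hb
    obtain ⟨hbS, hbA⟩ := mem_sdiff.1 hb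
    have hpb : p ∉ b := fun hpb => hbA (mem_filter.2 ⟨hbS, hpb⟩)
    have := h.card_le_card_inter_biUnion_add_one hAS hpA hbS hpb
    rw [card_sdiff, inter_comm, h.card_eq b hbS]
    omega
  calc #(S.biUnion id)
      ≤ #(A.biUnion id) + #((S \ A).biUnion fun b => b \ A.biUnion id) :=
        (card_le_card hcover).trans (card_union_le _ _)
    _ ≤ (#A * (q - 1) + 1) + #(S \ A) * (q + 1 - #A) := by
        rw [h.card_biUnion_of_forall_mem hAS hpA (card_pos.1 (by omega))]
        exact Nat.add_le_add_left (card_biUnion_le_card_mul _ _ _ hout) _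
    _ = _ := by rw [card_sdiff_of_subset hAS]

lemma card_biUnion_ne_of_le_card_filter_mem (h : IsAffineLineFamily S q σ) (hS : #S = 5)
    (hq : 3 ≤ q) (hp : 3 ≤ #{ℓ ∈ S | p ∈ ℓ}) : #(S.biUnion id) ≠ 5 * q - 5 := by
  intro hU
  have hle : #{ℓ ∈ S | p ∈ ℓ} ≤ 5 := hS ▸ card_filter_le _ _
  by_cases h5 : #{ℓ ∈ S | p ∈ ℓ} = 5
  · have hall : {ℓ ∈ S | p ∈ ℓ} = S := eq_of_subset_of_card_le (filter_subset _ _) (by omega)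
    have hpS : ∀ ℓ ∈ S, p ∈ ℓ := fun ℓ hℓ => by
      rw [← hall] at hℓ
      exact (mem_filter.1 hℓ).2
    have := h.card_biUnion_of_forall_mem subset_rfl hpS (card_pos.1 (by omega))
    rw [hS] at this
    omega
  · have := h.card_biUnion_le_of_mem (p := p) (by omega)
    rw [hS] at this
    interval_cases #{ℓ ∈ S | p ∈ ℓ} <;> omega

lemma card_biUnion_ne_of_card_filter_mem_le_two (h : IsAffineLineFamily S q σ) (hS : #S = 5)
    (hq : 1 ≤ q) (hM : ∀ p ∈ S.biUnion id, #{ℓ ∈ S | p ∈ ℓ} ≤ 2) :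
    #(S.biUnion id) ≠ 5 * q - 5 := by
  classical
  have hid := two_mul_sum_card_add_sum_eq S
  rw [sum_eq_zero (s := S.biUnion id) fun p hp => Nat.mul_eq_zero.2
      (Or.inr (Nat.sub_eq_zero_of_le (hM p hp))),
    sum_congr rfl h.card_eq, sum_const, smul_eq_mul, hS] at hid
  have hmeet : ∑ x ∈ S.offDiag, #(x.1 ∩ x.2) = #{x ∈ S.offDiag | ¬σ x.1 = σ x.2} := by
    rw [card_filter]
    refine sum_congr rfl fun x hx => ?_
    obtain ⟨h1, h2, h12⟩ := mem_offDiag.1 hx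
    split_ifs with hσ
    · rw [h.inter_eq_empty _ h1 _ h2 h12 hσ, card_empty]
    · exact h.card_inter_eq_one _ h1 _ h2 hσ
  have hsplit := card_filter_add_card_filter_not (s := S.offDiag) fun x => σ x.1 = σ x.2
  have hpar := card_filter_offDiag_ne_ten hS σ
  rw [offDiag_card, hS] at hsplit
  omega

lemma card_biUnion_ne_of_card_eq_five (h : IsAffineLineFamily S q σ) (hS : #S = 5)
    (hq : 3 ≤ q) : #(S.biUnion id) ≠ 5 * q - 5 := by
  by_cases hM : ∃ p ∈ S.biUnion id, 3 ≤ #{ℓ ∈ S | p ∈ ℓ}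
  · obtain ⟨p, -, hp⟩ := hM
    exact h.card_biUnion_ne_of_le_card_filter_mem hS hq hp
  · push Not at hM
    exact h.card_biUnion_ne_of_card_filter_mem_le_two hS (by omega) fun p hp => by
      have := hM p hp
      omega

lemma card_biUnion_ne (h : IsAffineLineFamily S q σ) (hq : 11 ≤ q) :
    #(S.biUnion id) ≠ 5 * q - 5 := by
  rcases lt_trichotomy #S 5 with hlt | heq | hgt
  · have := h.card_biUnion_le
    have : #S * q ≤ 4 * q := Nat.mul_le_mul_right q (by omega)
    omega
  · exact h.card_biUnion_ne_of_card_eq_five heq (by omega)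
  · obtain ⟨T, hTS, hT⟩ := exists_subset_card_eq (show 6 ≤ #S by omega)
    have h6 := (h.mono hTS).mul_le_card_biUnion
    have hsub := card_le_card (biUnion_subset_biUnion_of_subset_left id hTS)
    rw [hT] at h6
    omega

end IsAffineLineFamily

section AffineLine

variable (F : Type*) {V : Type*} [Field F] [Fintype F] [AddCommGroup V] [Module F V]
  [DecidableEq V]

def affineLine (p d : V) : Finset V := univ.image fun t : F => p + t • d

variable {F} {p d x y : V}

lemma mem_affineLine : x ∈ affineLine F p d ↔ ∃ t : F, p + t • d = x := by
  simp [affineLine]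

lemma left_mem_affineLine (p d : V) : p ∈ affineLine F p d :=
  mem_affineLine.2 ⟨0, by simp⟩

lemma card_affineLine (p : V) (hd : d ≠ 0) : #(affineLine F p d) = Fintype.card F :=
  card_image_of_injective _ ((add_right_injective p).comp (smul_left_injective F hd))

lemma affineLine_eq_of_mem (h : x ∈ affineLine F p d) : affineLine F x d = affineLine F p d := by
  obtain ⟨s, rfl⟩ := mem_affineLine.1 h
  ext y
  simp only [mem_affineLine]
  constructor
  · rintro ⟨t, rfl⟩; exact ⟨s + t, by rw [add_smul, add_assoc]⟩
  · rintro ⟨t, rfl⟩; exact ⟨t - s, by rw [sub_smul, add_assoc, add_sub_cancel]⟩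

lemma affineLine_smul (p : V) {s : F} (hs : s ≠ 0) :
    affineLine F p (s • d) = affineLine F p d := by
  ext y
  simp only [mem_affineLine, smul_smul]
  constructor
  · rintro ⟨t, rfl⟩; exact ⟨t * s, rfl⟩
  · rintro ⟨t, rfl⟩; exact ⟨t / s, by rw [div_mul_cancel₀ _ hs]⟩

lemma affineLine_eq_affineLine_sub (hx : x ∈ affineLine F p d) (hy : y ∈ affineLine F p d)
    (hxy : x ≠ y) : affineLine F p d = affineLine F x (y - x) := by
  rw [← affineLine_eq_of_mem hx]
  obtain ⟨s, rfl⟩ := mem_affineLine.1 hx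
  obtain ⟨t, rfl⟩ := mem_affineLine.1 hy
  have hst : t - s ≠ 0 := fun h => hxy (by rw [sub_eq_zero.1 h])
  rw [show p + t • d - (p + s • d) = (t - s) • d by rw [sub_smul]; abel, affineLine_smul _ hst]

lemma card_inter_affineLine_le_one {p' d' : V} (hne : affineLine F p d ≠ affineLine F p' d') :
    #(affineLine F p d ∩ affineLine F p' d') ≤ 1 := by
  refine card_le_one.2 fun x hx y hy => by_contra fun hxy => hne ?_
  rw [mem_inter] at hx hy
  rw [affineLine_eq_affineLine_sub hx.1 hy.1 hxy, affineLine_eq_affineLine_sub hx.2 hy.2 hxy]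

end AffineLine

section Restriction

variable {F σ : Type*} [Field F]

noncomputable def lineRestriction (P : MvPolynomial σ F) (p d : σ → F) : Polynomial F :=
  MvPolynomial.aeval (fun i => Polynomial.C (p i) + Polynomial.X * Polynomial.C (d i)) P

lemma eval_lineRestriction (P : MvPolynomial σ F) (p d : σ → F) (t : F) :
    (lineRestriction P p d).eval t = MvPolynomial.eval (p + t • d) P := by
  rw [lineRestriction, ← Polynomial.coe_aeval_eq_eval, MvPolynomial.comp_aeval_apply,
    MvPolynomial.aeval_eq_eval]
  congr 2
  funext i
  simp only [map_add, map_mul, Polynomial.aeval_C, Polynomial.aeval_X, Pi.add_apply,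
    Pi.smul_apply, smul_eq_mul, Algebra.algebraMap_self, RingHom.id_apply]

lemma natDegree_lineRestriction_le (P : MvPolynomial σ F) (p d : σ → F) :
    (lineRestriction P p d).natDegree ≤ P.totalDegree :=
  (MvPolynomial.aeval_natDegree_le P le_rfl _ fun i => by compute_degree).trans_eq (mul_one _)

variable [Fintype F] [DecidableEq F] [Fintype σ]

lemma card_filter_affineLine_eval_eq_zero_le (P : MvPolynomial σ F) {p d : σ → F}
    (h : ∃ x ∈ affineLine F p d, MvPolynomial.eval x P ≠ 0) :
    #{x ∈ affineLine F p d | MvPolynomial.eval x P = 0} ≤ P.totalDegree := by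
  have hg : lineRestriction P p d ≠ 0 := by
    obtain ⟨x, hx, hPx⟩ := h
    obtain ⟨t, rfl⟩ := mem_affineLine.1 hx
    exact fun h0 => hPx (by rw [← eval_lineRestriction, h0, Polynomial.eval_zero])
  have hsub : {x ∈ affineLine F p d | MvPolynomial.eval x P = 0} ⊆
      (lineRestriction P p d).roots.toFinset.image fun t => p + t • d := by
    intro x hx
    obtain ⟨hx, hPx⟩ := mem_filter.1 hx
    obtain ⟨t, rfl⟩ := mem_affineLine.1 hx
    refine mem_image_of_mem _ (Multiset.mem_toFinset.2 ((Polynomial.mem_roots hg).2 ?_))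
    rw [Polynomial.IsRoot, eval_lineRestriction, hPx]
  calc _ ≤ #((lineRestriction P p d).roots.toFinset.image fun t => p + t • d) := card_le_card hsub
    _ ≤ (lineRestriction P p d).roots.card := card_image_le.trans (Multiset.toFinset_card_le _)
    _ ≤ P.totalDegree := (Polynomial.card_roots' _).trans (natDegree_lineRestriction_le P p d)

end Restriction

section Plane

variable {F : Type*} [Field F]

/-- Direction vectors of the `q + 1` lines through a point: `none` is vertical. -/
def slopeDir : Option F → Fin 2 → F
  | none => ![0, 1]
  | some s => ![1, s]

lemma slopeDir_ne_zero (o : Option F) : slopeDir o ≠ 0 := by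
  cases o <;> simp [slopeDir, funext_iff, Fin.forall_fin_two]

lemma eq_of_smul_slopeDir_eq {s : F} {o o' : Option F} (h : s • slopeDir o = slopeDir o') :
    o = o' := by
  have h0 := congrFun h 0
  have h1 := congrFun h 1
  cases o <;> cases o' <;> simp_all [slopeDir]

lemma exists_add_smul_slopeDir_eq (p p' : Fin 2 → F) {o o' : Option F} (h : o ≠ o') :
    ∃ t t' : F, p + t • slopeDir o = p' + t' • slopeDir o' := by
  suffices key : ∀ (p p' : Fin 2 → F) (s' : F) (o : Option F), o ≠ some s' →
      ∃ t t' : F, p + t • slopeDir o = p' + t' • slopeDir (some s') by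
    cases o' with
    | some s' => exact key p p' s' o h
    | none =>
      obtain ⟨s, rfl⟩ := Option.ne_none_iff_exists'.1 h
      obtain ⟨t', t, h'⟩ := key p' p s none (Option.some_ne_none s).symm
      exact ⟨t, t', h'.symm⟩
  intro p p' s' o h
  cases o with
  | none =>
    refine ⟨p' 1 + (p 0 - p' 0) * s' - p 1, p 0 - p' 0, funext fun i => ?_⟩
    fin_cases i <;> simp [slopeDir]
  | some s =>
    have hs : s - s' ≠ 0 := sub_ne_zero.2 fun h' => h (by rw [h'])
    set t := (p' 1 - p 1 + (p 0 - p' 0) * s') / (s - s')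
    refine ⟨t, t + p 0 - p' 0, funext fun i => ?_⟩
    fin_cases i
    · simp only [slopeDir, Matrix.smul_cons, smul_eq_mul, mul_one, Matrix.smul_empty, Fin.isValue,
        Fin.zero_eta, Pi.add_apply, Matrix.cons_val_zero, add_sub_cancel]
      ring
    · simp only [slopeDir, Matrix.smul_cons, smul_eq_mul, mul_one, Matrix.smul_empty, Fin.isValue,
        Fin.mk_one, Pi.add_apply, Matrix.cons_val_one, Matrix.cons_val_fin_one, t]
      field_simp
      ring

variable [Fintype F] [DecidableEq F]

lemma eq_of_affineLine_slopeDir_eq {p p' : Fin 2 → F} {o o' : Option F}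
    (h : affineLine F p (slopeDir o) = affineLine F p' (slopeDir o')) : o = o' := by
  have hp := h ▸ left_mem_affineLine (F := F) p (slopeDir o)
  have hq := h ▸ mem_affineLine.2 ⟨1, rfl⟩
  obtain ⟨s, hs⟩ := mem_affineLine.1 hp
  obtain ⟨t, ht⟩ := mem_affineLine.1 hq
  refine (eq_of_smul_slopeDir_eq (s := t - s) ?_).symm
  rw [sub_smul, ← add_sub_add_left_eq_sub _ _ p', ht, hs, one_smul, add_sub_cancel_left]

def slopeTo (x y : Fin 2 → F) : Option F :=
  if x 0 = y 0 then none else some ((y 1 - x 1) / (y 0 - x 0))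

lemma mem_affineLine_slopeTo (x y : Fin 2 → F) :
    y ∈ affineLine F x (slopeDir (slopeTo x y)) := by
  rw [mem_affineLine]
  unfold slopeTo
  split_ifs with h
  · exact ⟨y 1 - x 1, funext fun i => by fin_cases i <;> simp [slopeDir, h]⟩
  · have : y 0 - x 0 ≠ 0 := sub_ne_zero.2 (Ne.symm h)
    refine ⟨y 0 - x 0, funext fun i => ?_⟩
    fin_cases i <;>
      simp only [slopeDir, Matrix.smul_cons, smul_eq_mul, mul_one, Matrix.smul_empty,
        Pi.add_apply, Matrix.cons_val_zero, Matrix.cons_val_one, Matrix.cons_val_fin_one,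
        Fin.isValue, Fin.zero_eta, Fin.mk_one, add_sub_cancel]
    field_simp
    ring

variable (F) in
def planeLines : Finset (Finset (Fin 2 → F)) :=
  univ.image fun x : (Fin 2 → F) × Option F => affineLine F x.1 (slopeDir x.2)

noncomputable def lineSlope (ℓ : Finset (Fin 2 → F)) : Option F :=
  if h : ∃ x : (Fin 2 → F) × Option F, affineLine F x.1 (slopeDir x.2) = ℓ then h.choose.2
  else none

lemma lineSlope_affineLine (p : Fin 2 → F) (o : Option F) :
    lineSlope (affineLine F p (slopeDir o)) = o := by
  have h : ∃ x : (Fin 2 → F) × Option F, affineLine F x.1 (slopeDir x.2) =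
      affineLine F p (slopeDir o) := ⟨(p, o), rfl⟩
  rw [lineSlope, dif_pos h]
  exact eq_of_affineLine_slopeDir_eq h.choose_spec

lemma isAffineLineFamily_planeLines :
    IsAffineLineFamily (planeLines F) (Fintype.card F) lineSlope where
  card_eq ℓ hℓ := by
    obtain ⟨⟨p, o⟩, -, rfl⟩ := mem_image.1 hℓ
    exact card_affineLine p (slopeDir_ne_zero o)
  inter_eq_empty ℓ hℓ ℓ' hℓ' hne hσ := by
    obtain ⟨⟨p, o⟩, -, rfl⟩ := mem_image.1 hℓ
    obtain ⟨⟨p', o'⟩, -, rfl⟩ := mem_image.1 hℓ'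
    rw [lineSlope_affineLine, lineSlope_affineLine] at hσ
    subst hσ
    refine eq_empty_of_forall_notMem fun x hx => hne ?_
    rw [← affineLine_eq_of_mem (mem_inter.1 hx).1, affineLine_eq_of_mem (mem_inter.1 hx).2]
  card_inter_eq_one ℓ hℓ ℓ' hℓ' hσ := by
    obtain ⟨⟨p, o⟩, -, rfl⟩ := mem_image.1 hℓ
    obtain ⟨⟨p', o'⟩, -, rfl⟩ := mem_image.1 hℓ'
    rw [lineSlope_affineLine, lineSlope_affineLine] at hσ
    obtain ⟨t, t', ht⟩ := exists_add_smul_slopeDir_eq p p' hσ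
    have hmeet : p + t • slopeDir o ∈ affineLine F p (slopeDir o) ∩ affineLine F p' (slopeDir o') :=
      mem_inter.2 ⟨mem_affineLine.2 ⟨t, rfl⟩, mem_affineLine.2 ⟨t', ht.symm⟩⟩
    exact le_antisymm (card_inter_affineLine_le_one fun h => hσ (eq_of_affineLine_slopeDir_eq h))
      (card_pos.2 ⟨_, hmeet⟩)

lemma card_le_of_card_inter_affineLine_slopeDir_le {Z : Finset (Fin 2 → F)} {x : Fin 2 → F}
    (hx : x ∈ Z) {k : ℕ} (hk : ∀ o : Option F, #(affineLine F x (slopeDir o) ∩ Z) ≤ k + 1) :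
    #Z ≤ (Fintype.card F + 1) * k + 1 := by
  have hcover : Z.erase x ⊆ univ.biUnion fun o => (affineLine F x (slopeDir o) ∩ Z).erase x :=
    fun y hy => mem_biUnion.2 ⟨slopeTo x y, mem_univ _, mem_erase.2
      ⟨(mem_erase.1 hy).1, mem_inter.2 ⟨mem_affineLine_slopeTo x y, (mem_erase.1 hy).2⟩⟩⟩
  have hline : ∀ o ∈ (univ : Finset (Option F)),
      #((affineLine F x (slopeDir o) ∩ Z).erase x) ≤ k := fun o _ => by
    rw [card_erase_of_mem (mem_inter.2 ⟨left_mem_affineLine x _, hx⟩)]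
    have := hk o
    omega
  have := (card_le_card hcover).trans (card_biUnion_le_card_mul _ _ _ hline)
  rw [card_erase_of_mem hx, card_univ, Fintype.card_option] at this
  omega

lemma card_filter_eval_eq_zero_ne (P : MvPolynomial (Fin 2) F) (hP : P.totalDegree ≤ 5)
    (hq : 11 ≤ Fintype.card F) : #{x | MvPolynomial.eval x P = 0} ≠ 5 * Fintype.card F - 5 := by
  set Z : Finset (Fin 2 → F) := {x | MvPolynomial.eval x P = 0}
  by_cases hcov : ∀ x ∈ Z, ∃ o, affineLine F x (slopeDir o) ⊆ Z
  · have hZ : Z = ((planeLines F).filter (· ⊆ Z)).biUnion id := by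
      ext x
      refine ⟨fun hx => ?_, fun hx => ?_⟩
      · obtain ⟨o, ho⟩ := hcov x hx
        exact mem_biUnion.2 ⟨_, mem_filter.2 ⟨mem_image_of_mem _ (mem_univ (x, o)), ho⟩,
          left_mem_affineLine _ _⟩
      · obtain ⟨ℓ, hℓ, hxℓ⟩ := mem_biUnion.1 hx
        exact (mem_filter.1 hℓ).2 hxℓ
    rw [hZ]
    exact (isAffineLineFamily_planeLines.mono (filter_subset _ _)).card_biUnion_ne hq
  · push Not at hcov
    obtain ⟨x, hx, hnot⟩ := hcov
    have hline : ∀ o, #(affineLine F x (slopeDir o) ∩ Z) ≤ 4 + 1 := fun o => by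
      obtain ⟨y, hy, hyZ⟩ := not_subset.1 (hnot o)
      rw [inter_filter, inter_univ]
      exact (card_filter_affineLine_eval_eq_zero_le P ⟨y, hy, by simpa [Z] using hyZ⟩).trans hP
    have := card_le_of_card_inter_affineLine_slopeDir_le hx hline
    omega

end Plane

section Codeword

lemma hamWt_eq_card_filter {α R : Type*} [Fintype α] [Zero R] [DecidableEq R] (f : α → R) :
    hamWt f = #{x | f x ≠ 0} := by
  rw [hamWt, Set.ncard_eq_toFinset_card', Set.toFinset_ofPred]

variable {F : Type*} [Field F]

open MvPolynomial in
noncomputable def gridPoly (A B : Finset F) : MvPolynomial (Fin 2) F :=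
  (∏ a ∈ A, (X 0 - C a)) * ∏ b ∈ B, (X 1 - C b)

lemma totalDegree_gridPoly_le (A B : Finset F) : (gridPoly A B).totalDegree ≤ #A + #B := by
  have hfactor (i : Fin 2) (c : F) : (MvPolynomial.X i - MvPolynomial.C c).totalDegree ≤ 1 :=
    (MvPolynomial.totalDegree_sub_C_le _ _).trans (MvPolynomial.totalDegree_X i).le
  refine (MvPolynomial.totalDegree_mul _ _).trans (add_le_add ?_ ?_) <;>
  · refine (MvPolynomial.totalDegree_finsetProd _ _).trans ?_
    simpa using sum_le_sum fun c _ => hfactor _ c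

variable [Fintype F] [DecidableEq F]

lemma hamWt_eval_gridPoly (A B : Finset F) :
    hamWt (fun z => MvPolynomial.eval z (gridPoly A B)) =
      (Fintype.card F - #A) * (Fintype.card F - #B) := by
  have hsupp : ({z | MvPolynomial.eval z (gridPoly A B) ≠ 0} : Finset (Fin 2 → F)) =
      Fintype.piFinset ![Aᶜ, Bᶜ] := by
    ext z
    simp [gridPoly, Fintype.mem_piFinset, Fin.forall_fin_two, prod_eq_zero_iff, sub_eq_zero]
  rw [hamWt_eq_card_filter, hsupp, Fintype.card_piFinset, Fin.prod_univ_two]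
  simp [card_compl]

end Codeword

lemma sub_four_mul_sub_one_add_two {q : ℕ} (hq : 4 ≤ q) :
    (q - 4) * (q - 1) + 2 = (q - 3) * (q - 2) := by
  obtain ⟨n, rfl⟩ := Nat.exists_eq_add_of_le' hq
  rw [show n + 4 - 4 = n by omega, show n + 4 - 1 = n + 3 by omega,
    show n + 4 - 3 = n + 1 by omega, show n + 4 - 2 = n + 2 by omega]
  ring

lemma zeros_eq_of_lt_weight_lt {q w z : ℕ} (hq : 4 ≤ q) (hwz : w + z = q ^ 2)
    (hlo : (q - 4) * (q - 1) < w) (hhi : w < (q - 3) * (q - 2)) : z = 5 * q - 5 := by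
  have hw : w = (q - 4) * (q - 1) + 1 := by
    have := sub_four_mul_sub_one_add_two hq
    omega
  obtain ⟨n, rfl⟩ := Nat.exists_eq_add_of_le' hq
  rw [hw, show n + 4 - 4 = n by omega, show n + 4 - 1 = n + 3 by omega] at hwz
  rw [show 5 * (n + 4) - 5 = 5 * n + 15 by omega]
  nlinarith

/-- For `q ≥ 13`, the third weight of `R_q(5,2)` (the smallest codeword weight strictly
greater than the second weight `(q-4)(q-1)`) equals `(q-3)(q-2)`. -/
theorem stmt14 {F : Type*} [Field F] [Fintype F] (q : ℕ) (hq : Fintype.card F = q)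
    (hq13 : 13 ≤ q) :
    IsLeast {w : ℕ | ∃ f : (Fin 2 → F) → F,
      (∃ P : MvPolynomial (Fin 2) F, P.totalDegree ≤ 5 ∧
        ∀ x, MvPolynomial.eval x P = f x) ∧
      hamWt f = w ∧ (q - 4) * (q - 1) < w} ((q - 3) * (q - 2)) := by
  classical
  subst hq
  refine ⟨?_, fun w ⟨f, ⟨P, hP, hf⟩, hw, hlo⟩ => not_lt.1 fun hhi => ?_⟩
  · obtain ⟨A, -, hA⟩ := exists_subset_card_eq (s := (univ : Finset F)) (n := 3)
      (by rw [card_univ]; omega)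
    obtain ⟨B, -, hB⟩ := exists_subset_card_eq (s := (univ : Finset F)) (n := 2)
      (by rw [card_univ]; omega)
    have := sub_four_mul_sub_one_add_two (q := Fintype.card F) (by omega)
    exact ⟨_, ⟨gridPoly A B, (totalDegree_gridPoly_le A B).trans (by omega), fun _ => rfl⟩,
      by rw [hamWt_eval_gridPoly, hA, hB], by omega⟩
  · obtain rfl : f = fun x => MvPolynomial.eval x P := funext fun x => (hf x).symm
    rw [hamWt_eq_card_filter] at hw
    have hsplit := card_filter_add_card_filter_not (s := univ)
      fun x : Fin 2 → F => MvPolynomial.eval x P ≠ 0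
    simp only [not_not, card_univ, Fintype.card_fun, Fintype.card_fin] at hsplit
    rw [hw] at hsplit
    exact card_filter_eval_eq_zero_ne P hP (by omega)
      (zeros_eq_of_lt_weight_lt (by omega) hsplit hlo hhi)
end
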